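/- arXiv:2108.05683 — 2 statements merged into one kernel-verified Lean document; each statement's English description precedes it below -/
import Mathlib

section
/- Let S = k[x_1,...,x_n] and fix 1 ≤ h < n. Let Γ_1 be a list of ℕ × ℕ^(n−h)-homogeneous polynomials of S, each of total degree at most j − 1, and let Γ_2 be a list of ℕ × ℕ^(n−h)-homogeneous polynomials, each of total degree exactly j, with |Γ_2| ≤ λ_j(Γ_1). Let Γ be the list obtained by appending Γ_2 to Γ_1. Then λ_{j+1}(Γ) ≤ 2·λ_j(Γ_1)^2 + (2h − 1)·λ_j(Γ_1). -/
open MvPolynomial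

noncomputable section

/-- The dimension `λ_N(Γ)` of the degree-`N` graded piece of the free `S̄`-module `Λ(Γ)`
attached to a list `Γ` of `ℕ × ℕ^(n-h)`-homogeneous elements `γ_r = γ̄_r · m_r`
(recorded by the degrees `e r = deg γ̄_r` and monomials `μ r = m_r`):
`Λ(Γ) = ⊕_r ⊕_{m ∈ L_r} S̄ e_m^r` with `deg e_m^r = deg m + e r`, where
`L_r = { lcm(m_{i_1},…,m_{i_s}, m_r) : {i_1,…,i_s} ⊆ {1,…,r-1} }`, and
`dim_k S̄_d = C(d + h - 1, h - 1)` for the polynomial ring `S̄` in `h` variables. -/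
noncomputable def lamDim {n : ℕ} (h : ℕ) {t : ℕ} (e : Fin t → ℕ)
    (μ : Fin t → (Fin n →₀ ℕ)) (N : ℕ) : ℕ := by
  classical
  exact ∑ r : Fin t,
    ∑ m ∈ ((Finset.univ.filter (fun s : Fin t => s < r)).powerset).image
        (fun A => A.sup μ ⊔ μ r),
      if (m.sum fun _ v => v) + e r ≤ N then
        Nat.choose (N - ((m.sum fun _ v => v) + e r) + h - 1) (h - 1)
      else 0

/-! Let `Λ = λ_j(Γ₁)`. Going from degree `j` to `j + 1`, a basis element `e_m^r` of degree
`≤ j` contributes at most `h` times as much as before, since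
`C(d + h, h - 1) ≤ h · C(d + h - 1, h - 1)`, and one of degree exactly `j + 1` contributes `1`.
A generator `m ∈ L_r` of degree `j + 1` is `lcm(m_i, m_r)` for some `i < r` or the lcm of two
distinct elements of `L_r` of smaller degree; either way it is the join of an unordered pair of
distinct basis elements of degree `≤ j`, so there are at most `C(λ_j(Γ), 2)` of them. Each element
of `Γ₂` contributes exactly `1` to `λ_j(Γ)`, so `λ_j(Γ) ≤ 2Λ` and
`λ_{j+1}(Γ) ≤ 2hΛ + C(2Λ, 2) = 2Λ² + (2h - 1)Λ`. -/

namespace LambdaCount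

open Finset Finsupp

lemma degree_lt_degree {σ : Type*} {a b : σ →₀ ℕ} (hab : a < b) : a.degree < b.degree := by
  obtain ⟨c, rfl⟩ := le_iff_exists_add.1 hab.le
  have hc : c ≠ 0 := by rintro rfl; simp at hab
  rw [map_add]
  have : c.degree ≠ 0 := by rwa [Ne, degree_eq_zero_iff]
  omega

lemma choose_add_succ_le (M k : ℕ) : (M + k + 1).choose k ≤ (k + 1) * (M + k).choose k := by
  refine Nat.le_of_mul_le_mul_right ?_ (Nat.succ_pos M)
  have key := Nat.choose_mul_succ_eq (M + k) k
  rw [show M + k + 1 - k = M + 1 by omega] at key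
  calc (M + k + 1).choose k * (M + 1) = (M + k).choose k * (M + k + 1) := key.symm
    _ ≤ (M + k).choose k * ((k + 1) * (M + 1)) := by gcongr; nlinarith
    _ = (k + 1) * (M + k).choose k * (M + 1) := by ring

/-- `dim_k S̄(-d)_N` for a polynomial ring `S̄` in `h` variables. -/
def dimShift (h d N : ℕ) : ℕ := if d ≤ N then (N - d + h - 1).choose (h - 1) else 0

lemma dimShift_self (h N : ℕ) : dimShift h N N = 1 := by simp [dimShift]

lemma dimShift_of_lt {h d N : ℕ} (hN : N < d) : dimShift h d N = 0 := by
  simp [dimShift, hN.not_ge]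

lemma one_le_dimShift {h d N : ℕ} (h1 : 1 ≤ h) (hd : d ≤ N) : 1 ≤ dimShift h d N := by
  rw [dimShift, if_pos hd]
  exact Nat.choose_pos (by omega)

lemma dimShift_succ_le {h : ℕ} (h1 : 1 ≤ h) (d N : ℕ) :
    dimShift h d (N + 1) ≤ h * dimShift h d N + if d = N + 1 then 1 else 0 := by
  obtain ⟨k, rfl⟩ : ∃ k, h = k + 1 := ⟨h - 1, by omega⟩
  simp only [dimShift, Nat.add_sub_cancel]
  split_ifs <;> try omega
  · rw [show N + 1 - d + (k + 1) - 1 = N - d + k + 1 by omega,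
      show N - d + (k + 1) - 1 = N - d + k by omega, add_zero]
    exact choose_add_succ_le (N - d) k
  · simp [show N + 1 - d = 0 by omega]

variable {σ : Type*} [DecidableEq σ] {t : ℕ}

/-- The index set `L_r` of the paper: on exponent vectors `⊔` is the lcm of monomials. -/
def lcmSet (μ : Fin t → σ →₀ ℕ) (r : Fin t) : Finset (σ →₀ ℕ) :=
  (univ.filter fun s : Fin t => s < r).powerset.image fun A => A.sup μ ⊔ μ r

lemma mem_lcmSet {μ : Fin t → σ →₀ ℕ} {r : Fin t} {m : σ →₀ ℕ} :
    m ∈ lcmSet μ r ↔ ∃ A : Finset (Fin t), (∀ i ∈ A, i < r) ∧ A.sup μ ⊔ μ r = m := by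
  simp [lcmSet, subset_iff]

lemma self_mem_lcmSet (μ : Fin t → σ →₀ ℕ) (r : Fin t) : μ r ∈ lcmSet μ r :=
  mem_lcmSet.2 ⟨∅, by simp⟩

lemma sup_mem_lcmSet (μ : Fin t → σ →₀ ℕ) {i r : Fin t} (hir : i < r) :
    μ i ⊔ μ r ∈ lcmSet μ r :=
  mem_lcmSet.2 ⟨{i}, by simpa using hir, by simp⟩

lemma le_of_mem_lcmSet {μ : Fin t → σ →₀ ℕ} {r : Fin t} {m : σ →₀ ℕ} (hm : m ∈ lcmSet μ r) :
    μ r ≤ m := by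
  obtain ⟨A, -, rfl⟩ := mem_lcmSet.1 hm
  exact le_sup_right

lemma lcmSet_append_castAdd {t₁ t₂ : ℕ} (μ₁ : Fin t₁ → σ →₀ ℕ) (μ₂ : Fin t₂ → σ →₀ ℕ)
    (r : Fin t₁) : lcmSet (Fin.append μ₁ μ₂) (Fin.castAdd t₂ r) = lcmSet μ₁ r := by
  simp only [lcmSet, filter_gt_eq_Iio, ← Fin.finsetImage_castAdd_Iio, powerset_image, image_image]
  congr! with A
  simp [sup_image, Function.comp_def]

theorem lcmSet_decomp {μ : Fin t → σ →₀ ℕ} {r : Fin t} {m : σ →₀ ℕ} (hm : m ∈ lcmSet μ r)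
    (hne : m ≠ μ r) :
    (∃ i < r, μ i ⊔ μ r = m) ∨
      ∃ a ∈ lcmSet μ r, ∃ b ∈ lcmSet μ r, a < m ∧ b < m ∧ a ⊔ b = m := by
  obtain ⟨A, hA, rfl⟩ := mem_lcmSet.1 hm
  clear hm
  induction A using Finset.induction_on with
  | empty => simp at hne
  | insert i A _ ih =>
    have hir : i < r := hA i (mem_insert_self i A)
    have hA' : ∀ s ∈ A, s < r := fun s hs => hA s (mem_insert_of_mem hs)
    have hjoin : (insert i A).sup μ ⊔ μ r = (A.sup μ ⊔ μ r) ⊔ (μ i ⊔ μ r) := by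
      rw [sup_insert]; ext c; simp only [Finsupp.sup_apply]; omega
    rw [hjoin] at hne ⊢
    by_cases h' : A.sup μ ⊔ μ r ⊔ (μ i ⊔ μ r) = A.sup μ ⊔ μ r
    · rw [h'] at hne ⊢
      exact ih hA' hne
    by_cases h'' : A.sup μ ⊔ μ r ⊔ (μ i ⊔ μ r) = μ i ⊔ μ r
    · exact .inl ⟨i, hir, h''.symm⟩
    exact .inr ⟨_, mem_lcmSet.2 ⟨A, hA', rfl⟩, _, sup_mem_lcmSet μ hir,
      lt_of_le_of_ne le_sup_left (Ne.symm h'), lt_of_le_of_ne le_sup_right (Ne.symm h''), rfl⟩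

/-- `⟨r, m⟩` stands for the basis element `e_m^r` of `Λ(Γ)`. -/
def basisDegLE (e : Fin t → ℕ) (μ : Fin t → σ →₀ ℕ) (N : ℕ) : Finset (Σ _ : Fin t, σ →₀ ℕ) :=
  univ.sigma fun r => (lcmSet μ r).filter fun m => m.degree + e r ≤ N

def basisDegEq (e : Fin t → ℕ) (μ : Fin t → σ →₀ ℕ) (N : ℕ) : Finset (Σ _ : Fin t, σ →₀ ℕ) :=
  univ.sigma fun r => (lcmSet μ r).filter fun m => m.degree + e r = N

def pairJoin : Sym2 (Σ _ : Fin t, σ →₀ ℕ) → Σ _ : Fin t, σ →₀ ℕ :=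
  Sym2.lift ⟨fun x y => ⟨x.1 ⊔ y.1, x.2 ⊔ y.2⟩,
    fun x y => by dsimp only; rw [sup_comm x.1, sup_comm x.2]⟩

theorem basisDegEq_succ_subset {e : Fin t → ℕ} {μ : Fin t → σ →₀ ℕ} {N : ℕ}
    (hbase : ∀ r, (μ r).degree + e r ≤ N) :
    basisDegEq e μ (N + 1) ⊆
      ((basisDegLE e μ N).offDiag.image Sym2.mk.uncurry).image pairJoin := by
  have hjoin : ∀ x ∈ basisDegLE e μ N, ∀ y ∈ basisDegLE e μ N, x ≠ y →
      pairJoin s(x, y) ∈ ((basisDegLE e μ N).offDiag.image Sym2.mk.uncurry).image pairJoin :=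
    fun x hx y hy hxy => mem_image_of_mem _ (mem_image_of_mem _ (mem_offDiag.2 ⟨hx, hy, hxy⟩))
  rintro ⟨r, m⟩ hrm
  simp only [basisDegEq, mem_sigma, mem_univ, mem_filter, true_and] at hrm
  obtain ⟨hm, hdeg⟩ := hrm
  have hne : m ≠ μ r := by rintro rfl; linarith [hbase r]
  rcases lcmSet_decomp hm hne with ⟨i, hir, rfl⟩ | ⟨a, ha, b, hb, ham, hbm, rfl⟩
  · convert hjoin ⟨i, μ i⟩ (by simp [basisDegLE, self_mem_lcmSet, hbase])
      ⟨r, μ r⟩ (by simp [basisDegLE, self_mem_lcmSet, hbase]) (by simp [hir.ne]) using 1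
    simp [pairJoin, sup_eq_right.2 hir.le]
  · have hlow : ∀ c ∈ lcmSet μ r, c < a ⊔ b →
        (⟨r, c⟩ : Σ _ : Fin t, σ →₀ ℕ) ∈ basisDegLE e μ N := fun c hc hlt => by
        simp only [basisDegLE, mem_sigma, mem_univ, mem_filter, true_and]
        exact ⟨hc, by linarith [degree_lt_degree hlt]⟩
    have hab : a ≠ b := by rintro rfl; simp at ham
    convert hjoin _ (hlow a ha ham) _ (hlow b hb hbm) (by simpa using hab) using 1
    simp [pairJoin]

theorem card_basisDegEq_succ_le {e : Fin t → ℕ} {μ : Fin t → σ →₀ ℕ} {N : ℕ}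
    (hbase : ∀ r, (μ r).degree + e r ≤ N) :
    #(basisDegEq e μ (N + 1)) ≤ (#(basisDegLE e μ N)).choose 2 :=
  calc #(basisDegEq e μ (N + 1))
      ≤ #(((basisDegLE e μ N).offDiag.image Sym2.mk.uncurry).image pairJoin) :=
        card_le_card (basisDegEq_succ_subset hbase)
    _ ≤ #((basisDegLE e μ N).offDiag.image Sym2.mk.uncurry) := card_image_le
    _ = (#(basisDegLE e μ N)).choose 2 := Sym2.card_image_offDiag _

def rowDim (h : ℕ) (e : Fin t → ℕ) (μ : Fin t → σ →₀ ℕ) (N : ℕ) (r : Fin t) : ℕ :=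
  ∑ m ∈ lcmSet μ r, dimShift h (m.degree + e r) N

lemma rowDim_eq_one {h : ℕ} {e : Fin t → ℕ} {μ : Fin t → σ →₀ ℕ} {N : ℕ} {r : Fin t}
    (hr : (μ r).degree + e r = N) : rowDim h e μ N r = 1 := by
  rw [rowDim, sum_eq_single_of_mem (μ r) (self_mem_lcmSet μ r), hr, dimShift_self]
  intro m hm hne
  have hlt : μ r < m := lt_of_le_of_ne (le_of_mem_lcmSet hm) hne.symm
  exact dimShift_of_lt (by linarith [degree_lt_degree hlt])

lemma rowDim_append_castAdd {t₁ t₂ : ℕ} (h : ℕ) (e₁ : Fin t₁ → ℕ) (e₂ : Fin t₂ → ℕ)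
    (μ₁ : Fin t₁ → σ →₀ ℕ) (μ₂ : Fin t₂ → σ →₀ ℕ) (N : ℕ) (r : Fin t₁) :
    rowDim h (Fin.append e₁ e₂) (Fin.append μ₁ μ₂) N (Fin.castAdd t₂ r) = rowDim h e₁ μ₁ N r := by
  simp only [rowDim, lcmSet_append_castAdd, Fin.append_left]

variable {n : ℕ}

lemma lamDim_eq_sum_rowDim (h : ℕ) (e : Fin t → ℕ) (μ : Fin t → Fin n →₀ ℕ) (N : ℕ) :
    lamDim h e μ N = ∑ r, rowDim h e μ N r :=
  rfl

lemma card_basisDegLE_le_lamDim {h : ℕ} (h1 : 1 ≤ h) (e : Fin t → ℕ) (μ : Fin t → Fin n →₀ ℕ)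
    (N : ℕ) : #(basisDegLE e μ N) ≤ lamDim h e μ N := by
  rw [lamDim_eq_sum_rowDim, basisDegLE, card_sigma]
  gcongr with r
  rw [card_filter, rowDim]
  gcongr with m
  split_ifs with hm
  exacts [one_le_dimShift h1 hm, Nat.zero_le _]

lemma lamDim_succ_le {h : ℕ} (h1 : 1 ≤ h) (e : Fin t → ℕ) (μ : Fin t → Fin n →₀ ℕ) (N : ℕ) :
    lamDim h e μ (N + 1) ≤ h * lamDim h e μ N + #(basisDegEq e μ (N + 1)) := by
  simp only [lamDim_eq_sum_rowDim, rowDim, basisDegEq, card_sigma, card_filter, Finset.mul_sum,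
    ← sum_add_distrib]
  gcongr with r _ m
  exact dimShift_succ_le h1 _ _

lemma lamDim_append {h t₁ t₂ : ℕ} (e₁ : Fin t₁ → ℕ) (e₂ : Fin t₂ → ℕ)
    (μ₁ : Fin t₁ → Fin n →₀ ℕ) (μ₂ : Fin t₂ → Fin n →₀ ℕ) {N : ℕ}
    (hdeg : ∀ s, (μ₂ s).degree + e₂ s = N) :
    lamDim h (Fin.append e₁ e₂) (Fin.append μ₁ μ₂) N = lamDim h e₁ μ₁ N + t₂ := by
  simp only [lamDim_eq_sum_rowDim, Fin.sum_univ_add, rowDim_append_castAdd]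
  congr 1
  rw [Fintype.sum_congr _ (fun _ => 1) fun s => rowDim_eq_one (by simpa using hdeg s)]
  simp

lemma mul_two_mul_add_choose_two {h : ℕ} (h1 : 1 ≤ h) (L : ℕ) :
    h * (2 * L) + (2 * L).choose 2 = 2 * L ^ 2 + (2 * h - 1) * L := by
  rw [Nat.choose_two_right, mul_assoc, Nat.mul_div_cancel_left _ two_pos]
  rcases Nat.eq_zero_or_pos L with hL | hL
  · simp [hL]
  · zify [show 1 ≤ 2 * L by omega, show 1 ≤ 2 * h by omega]
    ring

end LambdaCount

open LambdaCount Finset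

theorem lambda_count_general
    (n h : ℕ) (h1 : 1 ≤ h)
    (t₁ t₂ : ℕ)
    (e₁ : Fin t₁ → ℕ)
    (μ₁ : Fin t₁ → (Fin n →₀ ℕ))
    (e₂ : Fin t₂ → ℕ)
    (μ₂ : Fin t₂ → (Fin n →₀ ℕ))
    (j : ℕ)
    (h1deg : ∀ r, e₁ r + (μ₁ r).sum (fun _ v => v) + 1 ≤ j)
    (h2deg : ∀ r, e₂ r + (μ₂ r).sum (fun _ v => v) = j)
    (hcard : t₂ ≤ lamDim h e₁ μ₁ j) :
    lamDim h (Fin.append e₁ e₂) (Fin.append μ₁ μ₂) (j + 1) ≤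
      2 * lamDim h e₁ μ₁ j ^ 2 + (2 * h - 1) * lamDim h e₁ μ₁ j := by
  have hdeg₁ : ∀ r, (μ₁ r).degree + e₁ r < j := fun r => by
    have := h1deg r; change e₁ r + (μ₁ r).degree + 1 ≤ j at this; omega
  have hdeg₂ : ∀ s, (μ₂ s).degree + e₂ s = j := fun s => by
    have := h2deg s; change e₂ s + (μ₂ s).degree = j at this; omega
  have hbase : ∀ r, (Fin.append μ₁ μ₂ r).degree + Fin.append e₁ e₂ r ≤ j :=
    Fin.addCases (fun r => by simpa using (hdeg₁ r).le) (fun s => by simp [hdeg₂ s])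
  set Λ := lamDim h e₁ μ₁ j
  set L := lamDim h (Fin.append e₁ e₂) (Fin.append μ₁ μ₂) j with hL
  have hLΛ : L ≤ 2 * Λ := by rw [hL, lamDim_append e₁ e₂ μ₁ μ₂ hdeg₂]; omega
  calc lamDim h (Fin.append e₁ e₂) (Fin.append μ₁ μ₂) (j + 1)
      ≤ h * L + #(basisDegEq (Fin.append e₁ e₂) (Fin.append μ₁ μ₂) (j + 1)) :=
        lamDim_succ_le h1 _ _ _
    _ ≤ h * L + L.choose 2 := by
        gcongr
        exact (card_basisDegEq_succ_le hbase).trans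
          (Nat.choose_le_choose 2 (card_basisDegLE_le_lamDim h1 _ _ _))
    _ ≤ h * (2 * Λ) + (2 * Λ).choose 2 := by gcongr
    _ = 2 * Λ ^ 2 + (2 * h - 1) * Λ := mul_two_mul_add_choose_two h1 Λ

/-- **Lemma 3.1 (λ-count).** Fix `1 ≤ h < n`. Let `Γ₁` be a list of `ℕ × ℕ^(n-h)`-homogeneous
polynomials `γ_r = γ̄₁_r · X^(μ₁_r)` of `S = k[x_1,…,x_n]`, each of total degree at most `j - 1`,
and let `Γ₂` be a list of `ℕ × ℕ^(n-h)`-homogeneous polynomials of total degree exactly `j`,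
with `|Γ₂| ≤ λ_j(Γ₁)`. Let `Γ` be the list obtained by appending `Γ₂` to `Γ₁`. Then
`λ_{j+1}(Γ) ≤ 2·λ_j(Γ₁)² + (2h − 1)·λ_j(Γ₁)`. -/
theorem lambda_count
    (k : Type) [Field k] (n h : ℕ) (h1 : 1 ≤ h) (hn : h < n)
    (t₁ t₂ : ℕ)
    (γbar₁ : Fin t₁ → MvPolynomial (Fin n) k) (e₁ : Fin t₁ → ℕ)
    (μ₁ : Fin t₁ → (Fin n →₀ ℕ))
    (γbar₂ : Fin t₂ → MvPolynomial (Fin n) k) (e₂ : Fin t₂ → ℕ)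
    (μ₂ : Fin t₂ → (Fin n →₀ ℕ))
    (j : ℕ)
    (h1hom : ∀ r, (γbar₁ r).IsHomogeneous (e₁ r)) (h1ne : ∀ r, γbar₁ r ≠ 0)
    (h1vars : ∀ r, ∀ m ∈ (γbar₁ r).support, ∀ i : Fin n, m i ≠ 0 → (i : ℕ) < h)
    (h1μvars : ∀ r, ∀ i : Fin n, μ₁ r i ≠ 0 → h ≤ (i : ℕ))
    (h1deg : ∀ r, e₁ r + (μ₁ r).sum (fun _ v => v) + 1 ≤ j)
    (h2hom : ∀ r, (γbar₂ r).IsHomogeneous (e₂ r)) (h2ne : ∀ r, γbar₂ r ≠ 0)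
    (h2vars : ∀ r, ∀ m ∈ (γbar₂ r).support, ∀ i : Fin n, m i ≠ 0 → (i : ℕ) < h)
    (h2μvars : ∀ r, ∀ i : Fin n, μ₂ r i ≠ 0 → h ≤ (i : ℕ))
    (h2deg : ∀ r, e₂ r + (μ₂ r).sum (fun _ v => v) = j)
    (hcard : t₂ ≤ lamDim h e₁ μ₁ j) :
    lamDim h (Fin.append e₁ e₂) (Fin.append μ₁ μ₂) (j + 1) ≤
      2 * lamDim h e₁ μ₁ j ^ 2 + (2 * h - 1) * lamDim h e₁ μ₁ j :=
  lambda_count_general n h h1 t₁ t₂ e₁ μ₁ e₂ μ₂ j h1deg h2deg hcard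
end
end

section
/- Let S = k[x_1,...,x_n], ω = (ω_1,...,ω_n) ∈ ℕ^n a weight, and S̃ = S[y] bigraded by deg(x_i) = (1, ω_i) and deg(y) = (0,1). Let f_1,...,f_t ∈ S̃ \ (y)S̃ be bi-homogeneous elements and I = (f_1,...,f_t). Then for any bi-homogeneous element f ∈ S̃ there exists a bi-homogeneous element g ∈ S̃ such that (I, f) : y^∞ = (I, g) : y^∞, and either g = 0, or deg_x(g) = deg_x(f) and the image of g under the evaluation y ↦ 0 does not belong to the image of I under the evaluation y ↦ 0. -/
open MvPolynomial

noncomputable section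

/-- An element of `S̃ = S[y]` (with `S = k[x_1,…,x_n]`) is bi-homogeneous of bidegree `(a, w)`
with respect to the weight `ω ∈ ℕⁿ` if every monomial `X^u y^b` occurring in it satisfies
`|u| = a` and `ω·u + b = w` (so `deg(x_i) = (1, ω_i)` and `deg(y) = (0,1)`). -/
def IsBiHomogeneous {k : Type} [Field k] {n : ℕ} (ω : Fin n → ℕ)
    (F : Polynomial (MvPolynomial (Fin n) k)) (a w : ℕ) : Prop :=
  ∀ b : ℕ, ∀ m ∈ (F.coeff b).support, (∑ i, m i) = a ∧ (∑ i, ω i * m i) + b = w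

/-- The total degree of `F ∈ S[y]` in the variables `x_1,…,x_n`. -/
def degX {k : Type} [Field k] {n : ℕ} (F : Polynomial (MvPolynomial (Fin n) k)) : ℕ :=
  F.support.sup fun b => (F.coeff b).totalDegree

/-- The saturation `J : y^∞ = ⋃_N (J : y^N)` of an ideal of `S̃ = S[y]`. -/
def ySat {k : Type} [Field k] {n : ℕ} (J : Ideal (Polynomial (MvPolynomial (Fin n) k))) :
    Ideal (Polynomial (MvPolynomial (Fin n) k)) :=
  ⨆ N : ℕ, Submodule.colon J
    (Ideal.span {(Polynomial.X : Polynomial (MvPolynomial (Fin n) k)) ^ N})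

/-! Induction on the `y`-weight `w` of `F`. If `F(0)` lies in `I(0) = (f_1(0), …, f_t(0))`, write
`F(0) = ∑ cᵢ fᵢ(0)` with `cᵢ ∈ S`; replacing each `cᵢ` by its weighted-homogeneous component of
bidegree `deg F - deg fᵢ` yields `h = ∑ cᵢ fᵢ ∈ I`, bi-homogeneous of the same bidegree as `F`,
with `h(0) = F(0)`. Then `F - h = y G` with `G` of bidegree `(a, w - 1)`, and
`(I, F) : y^∞ = (I, y G) : y^∞ = (I, G) : y^∞`, so one recurses on `G`. Every element produced has
`x`-degree `a`, which is `deg_x F` as soon as `F ≠ 0`. -/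

theorem MvPolynomial.weightedHomogeneousComponent_mul_of_isWeightedHomogeneous
    {R σ M : Type*} [CommSemiring R] [AddCommGroup M] {w : σ → M} {d e : M}
    (c : MvPolynomial σ R) {g : MvPolynomial σ R} (hg : IsWeightedHomogeneous w g e) :
    weightedHomogeneousComponent w d (c * g) = weightedHomogeneousComponent w (d - e) c * g := by
  classical
  induction c using MvPolynomial.induction_on' with
  | monomial u r =>
    have hu := isWeightedHomogeneous_monomial w u r rfl
    rw [weightedHomogeneousComponent_of_mem (hu.mul hg), weightedHomogeneousComponent_of_mem hu]
    by_cases hd : d = Finsupp.weight w u + e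
    · rw [if_pos hd, if_pos (by rw [hd, add_sub_cancel_right])]
    · rw [if_neg hd, if_neg (fun h => hd (sub_eq_iff_eq_add.mp h)), zero_mul]
  | add p q hp hq => rw [add_mul, map_add, map_add, hp, hq, add_mul]

theorem Ideal.sup_span_singleton_eq_of_sub_mem {R : Type*} [CommRing R] (I : Ideal R)
    {p q : R} (h : p - q ∈ I) : I ⊔ Ideal.span {p} = I ⊔ Ideal.span {q} := by
  have key : ∀ x y : R, x - y ∈ I → Ideal.span {x} ≤ I ⊔ Ideal.span {y} := fun x y hxy => by
    rw [Ideal.span_singleton_le_iff_mem, ← sub_add_cancel x y]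
    exact add_mem (Ideal.mem_sup_left hxy) (Ideal.mem_sup_right (Ideal.mem_span_singleton_self y))
  exact le_antisymm (sup_le le_sup_left (key p q h))
    (sup_le le_sup_left (key q p (by rw [← neg_sub]; exact neg_mem h)))

section BiHomogeneous

variable {k : Type} [Field k] {n : ℕ}

def biWeight (ω : Fin n → ℕ) : Fin n → ℤ × ℤ := fun i => (1, ω i)

theorem weight_biWeight (ω : Fin n → ℕ) (m : Fin n →₀ ℕ) :
    Finsupp.weight (biWeight ω) m = (((∑ i, m i : ℕ) : ℤ), ((∑ i, ω i * m i : ℕ) : ℤ)) := by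
  rw [Finsupp.weight_apply, Finsupp.sum_fintype _ _ (fun i => by simp)]
  ext
  · simp [biWeight, Prod.fst_sum]
  · simp [biWeight, Prod.snd_sum, mul_comm]

variable {ω : Fin n → ℕ} {F G : Polynomial (MvPolynomial (Fin n) k)} {a w : ℕ}

theorem isBiHomogeneous_iff_coeff :
    IsBiHomogeneous ω F a w ↔
      ∀ b : ℕ, IsWeightedHomogeneous (biWeight ω) (F.coeff b) ((a : ℤ), (w : ℤ) - b) := by
  refine forall_congr' fun b => ⟨fun h m hm => ?_, fun h m hm => ?_⟩
  · obtain ⟨h1, h2⟩ := h m (mem_support_iff.mpr hm)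
    rw [weight_biWeight, Prod.ext_iff]
    exact ⟨by exact_mod_cast congrArg _ h1, by omega⟩
  · have := h (mem_support_iff.mp hm)
    rw [weight_biWeight, Prod.mk.injEq] at this
    exact ⟨by exact_mod_cast this.1, by omega⟩

theorem IsBiHomogeneous.isWeightedHomogeneous_eval_zero (hF : IsBiHomogeneous ω F a w) :
    IsWeightedHomogeneous (biWeight ω) (Polynomial.eval 0 F) ((a : ℤ), (w : ℤ)) := by
  simpa [Polynomial.coeff_zero_eq_eval_zero] using isBiHomogeneous_iff_coeff.mp hF 0

theorem isBiHomogeneous_zero : IsBiHomogeneous ω (0 : Polynomial (MvPolynomial (Fin n) k)) a w :=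
  fun b m hm => by simp at hm

theorem IsBiHomogeneous.sub (hF : IsBiHomogeneous ω F a w) (hG : IsBiHomogeneous ω G a w) :
    IsBiHomogeneous ω (F - G) a w := by
  rw [isBiHomogeneous_iff_coeff] at *
  exact fun b => by simpa only [Polynomial.coeff_sub] using (hF b).sub (hG b)

theorem IsBiHomogeneous.sum {ι : Type*} (s : Finset ι)
    {φ : ι → Polynomial (MvPolynomial (Fin n) k)} (h : ∀ i ∈ s, IsBiHomogeneous ω (φ i) a w) :
    IsBiHomogeneous ω (∑ i ∈ s, φ i) a w := by
  simp only [isBiHomogeneous_iff_coeff, Polynomial.finsetSum_coeff] at *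
  exact fun b => IsWeightedHomogeneous.sum s _ _ fun i hi => h i hi b

theorem IsBiHomogeneous.C_mul {ai wi : ℕ} (hG : IsBiHomogeneous ω G ai wi)
    {c : MvPolynomial (Fin n) k}
    (hc : IsWeightedHomogeneous (biWeight ω) c ((a : ℤ) - ai, (w : ℤ) - wi)) :
    IsBiHomogeneous ω (Polynomial.C c * G) a w := by
  rw [isBiHomogeneous_iff_coeff] at *
  intro b
  rw [Polynomial.coeff_C_mul]
  convert hc.mul (hG b) using 1
  ext <;> simp

theorem IsBiHomogeneous.of_X_mul (h : IsBiHomogeneous ω (Polynomial.X * G) a (w + 1)) :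
    IsBiHomogeneous ω G a w := fun b m hm => by
  have := h (b + 1) m (by rwa [Polynomial.coeff_X_mul])
  omega

theorem IsBiHomogeneous.eq_zero_of_X_mul (h : IsBiHomogeneous ω (Polynomial.X * G) a 0) :
    G = 0 := by
  ext b m
  by_contra hm
  have := h (b + 1) m (by rwa [Polynomial.coeff_X_mul, mem_support_iff])
  omega

theorem IsBiHomogeneous.coeff_isHomogeneous (hF : IsBiHomogeneous ω F a w) (b : ℕ) :
    (F.coeff b).IsHomogeneous a := fun m hm => by
  rw [Pi.one_def, ← Finsupp.degree_eq_weight_one, Finsupp.degree_eq_sum]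
  exact (hF b m (mem_support_iff.mpr hm)).1

theorem IsBiHomogeneous.degX_eq (hF : IsBiHomogeneous ω F a w) (hF0 : F ≠ 0) : degX F = a := by
  unfold degX
  rw [Finset.sup_congr rfl fun b hb =>
      (hF.coeff_isHomogeneous b).totalDegree (Polynomial.mem_support_iff.mp hb),
    Finset.sup_const (Polynomial.support_nonempty.mpr hF0)]

end BiHomogeneous

section Saturation

variable {k : Type} [Field k] {n : ℕ} {J J' : Ideal (Polynomial (MvPolynomial (Fin n) k))}

theorem mem_ySat {p : Polynomial (MvPolynomial (Fin n) k)} :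
    p ∈ ySat J ↔ ∃ N : ℕ, Polynomial.X ^ N * p ∈ J := by
  have hmono : Monotone fun N : ℕ =>
      J.colon (Ideal.span {(Polynomial.X : Polynomial (MvPolynomial (Fin n) k)) ^ N}) :=
    fun N M hNM q hq => by
      rw [Ideal.mem_colon_span_singleton] at hq ⊢
      rw [← Nat.add_sub_cancel' hNM, pow_add, ← mul_assoc]
      exact J.mul_mem_right _ hq
  rw [ySat, Submodule.mem_iSup_of_directed _ hmono.directed_le]
  simp_rw [Ideal.mem_colon_span_singleton, mul_comm]

theorem ySat_mono (h : J ≤ J') : ySat J ≤ ySat J' := fun p hp => by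
  obtain ⟨N, hN⟩ := mem_ySat.mp hp
  exact mem_ySat.mpr ⟨N, h hN⟩

theorem ySat_sup_span_X_mul (G : Polynomial (MvPolynomial (Fin n) k)) :
    ySat (J ⊔ Ideal.span {Polynomial.X * G}) = ySat (J ⊔ Ideal.span {G}) := by
  refine le_antisymm (ySat_mono (sup_le_sup_left ?_ _)) fun p hp => ?_
  · exact Ideal.span_singleton_le_span_singleton.mpr (dvd_mul_left G _)
  obtain ⟨N, hN⟩ := mem_ySat.mp hp
  obtain ⟨i, hi, z, hz, hsum⟩ := Submodule.mem_sup.mp hN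
  obtain ⟨c, rfl⟩ := Ideal.mem_span_singleton'.mp hz
  refine mem_ySat.mpr ⟨N + 1, ?_⟩
  rw [pow_succ', mul_assoc, ← hsum, mul_add, mul_left_comm _ c]
  exact add_mem (Ideal.mem_sup_left (J.mul_mem_left _ hi))
    (Ideal.mem_sup_right (Ideal.mul_mem_left _ _ (Ideal.mem_span_singleton_self _)))

end Saturation

section Reduction

variable {k : Type} [Field k] {n : ℕ} {ω : Fin n → ℕ} {ι : Type*} [Fintype ι]
  {f : ι → Polynomial (MvPolynomial (Fin n) k)} {F : Polynomial (MvPolynomial (Fin n) k)}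
  {a w : ℕ}

theorem exists_isBiHomogeneous_mem_span_eval_zero_eq
    (hf : ∀ i, ∃ a w : ℕ, IsBiHomogeneous ω (f i) a w) (hF : IsBiHomogeneous ω F a w)
    (hev : Polynomial.eval 0 F ∈ (Ideal.span (Set.range f)).map (Polynomial.evalRingHom 0)) :
    ∃ h ∈ Ideal.span (Set.range f),
      IsBiHomogeneous ω h a w ∧ Polynomial.eval 0 h = Polynomial.eval 0 F := by
  choose af wf hfw using hf
  rw [Ideal.map_span, ← Set.range_comp, Ideal.mem_span_range_iff_exists_fun] at hev
  obtain ⟨c, hc⟩ := hev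
  simp only [Function.comp_apply, Polynomial.coe_evalRingHom] at hc
  -- only this component of `c i` contributes to the bidegree-`(a, w)` part of `C (c i) * f i`
  let c' i := weightedHomogeneousComponent (biWeight ω) ((a : ℤ) - af i, (w : ℤ) - wf i) (c i)
  refine ⟨∑ i, Polynomial.C (c' i) * f i,
    sum_mem fun i _ => Ideal.mul_mem_left _ _ (Ideal.subset_span ⟨i, rfl⟩),
    IsBiHomogeneous.sum _ fun i _ =>
      (hfw i).C_mul (weightedHomogeneousComponent_isWeightedHomogeneous _ _), ?_⟩
  calc Polynomial.eval 0 (∑ i, Polynomial.C (c' i) * f i)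
      = ∑ i, c' i * Polynomial.eval 0 (f i) := by simp [Polynomial.eval_finsetSum]
    _ = weightedHomogeneousComponent (biWeight ω) ((a : ℤ), (w : ℤ))
          (∑ i, c i * Polynomial.eval 0 (f i)) := by
        simp only [map_sum, weightedHomogeneousComponent_mul_of_isWeightedHomogeneous _
          (hfw _).isWeightedHomogeneous_eval_zero, Prod.mk_sub_mk, c']
    _ = Polynomial.eval 0 F := by
        rw [hc, hF.isWeightedHomogeneous_eval_zero.weightedHomogeneousComponent_same]

theorem exists_ySat_sup_span_eq_X_mul
    (hf : ∀ i, ∃ a w : ℕ, IsBiHomogeneous ω (f i) a w) (hF : IsBiHomogeneous ω F a w)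
    (hev : Polynomial.eval 0 F ∈ (Ideal.span (Set.range f)).map (Polynomial.evalRingHom 0)) :
    ∃ G, ySat (Ideal.span (Set.range f) ⊔ Ideal.span {F}) =
        ySat (Ideal.span (Set.range f) ⊔ Ideal.span {G}) ∧
      IsBiHomogeneous ω (Polynomial.X * G) a w := by
  obtain ⟨h, hI, hh, heval⟩ := exists_isBiHomogeneous_mem_span_eval_zero_eq hf hF hev
  obtain ⟨G, hG⟩ : Polynomial.X ∣ F - h := Polynomial.X_dvd_iff.mpr (by
    rw [Polynomial.coeff_sub, Polynomial.coeff_zero_eq_eval_zero,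
      Polynomial.coeff_zero_eq_eval_zero, heval, sub_self])
  refine ⟨G, ?_, hG ▸ hF.sub hh⟩
  rw [Ideal.sup_span_singleton_eq_of_sub_mem _ (show F - Polynomial.X * G ∈ _ by
    rwa [← hG, sub_sub_cancel]), ySat_sup_span_X_mul]

theorem exists_ySat_sup_span_eq_of_eval_zero_notMem
    (hf : ∀ i, ∃ a w : ℕ, IsBiHomogeneous ω (f i) a w) (hF : IsBiHomogeneous ω F a w) :
    ∃ g w', IsBiHomogeneous ω g a w' ∧
      ySat (Ideal.span (Set.range f) ⊔ Ideal.span {F}) =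
        ySat (Ideal.span (Set.range f) ⊔ Ideal.span {g}) ∧
      (g = 0 ∨ Polynomial.eval 0 g ∉
        (Ideal.span (Set.range f)).map (Polynomial.evalRingHom 0)) := by
  induction w using Nat.strong_induction_on generalizing F with
  | _ w ih =>
  by_cases hev : Polynomial.eval 0 F ∈ (Ideal.span (Set.range f)).map (Polynomial.evalRingHom 0)
  swap
  · exact ⟨F, w, hF, rfl, Or.inr hev⟩
  obtain ⟨G, hsat, hG⟩ := exists_ySat_sup_span_eq_X_mul hf hF hev
  rcases w with _ | w
  · exact ⟨0, 0, isBiHomogeneous_zero, by rw [hsat, hG.eq_zero_of_X_mul], Or.inl rfl⟩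
  · obtain ⟨g, w', hg, hgsat, hred⟩ := ih w w.lt_succ_self hG.of_X_mul
    exact ⟨g, w', hg, hsat.trans hgsat, hred⟩

end Reduction

theorem reduction_lemma_bihomogeneous_general
    (k : Type) [Field k] (n : ℕ) (ω : Fin n → ℕ) (t : ℕ)
    (f : Fin t → Polynomial (MvPolynomial (Fin n) k))
    (hbihom : ∀ i, ∃ a w : ℕ, IsBiHomogeneous ω (f i) a w)
    (F : Polynomial (MvPolynomial (Fin n) k)) (a w : ℕ) (hF : IsBiHomogeneous ω F a w) :
    ∃ g : Polynomial (MvPolynomial (Fin n) k),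
      (∃ a' w' : ℕ, IsBiHomogeneous ω g a' w') ∧
      ySat (Ideal.span (Set.range f) ⊔ Ideal.span {F}) =
        ySat (Ideal.span (Set.range f) ⊔ Ideal.span {g}) ∧
      (g = 0 ∨ (degX g = degX F ∧
        Polynomial.eval 0 g ∉
          Ideal.map (Polynomial.evalRingHom (0 : MvPolynomial (Fin n) k))
            (Ideal.span (Set.range f)))) := by
  by_cases hF0 : F = 0
  · exact ⟨0, ⟨0, 0, isBiHomogeneous_zero⟩, by rw [hF0], Or.inl rfl⟩
  obtain ⟨g, w', hg, hsat, hred⟩ := exists_ySat_sup_span_eq_of_eval_zero_notMem hbihom hF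
  refine ⟨g, ⟨a, w', hg⟩, hsat, hred.imp_right fun hev => ⟨?_, hev⟩⟩
  have hg0 : g ≠ 0 := by
    rintro rfl
    exact hev (by simp)
  rw [hg.degX_eq hg0, hF.degX_eq hF0]

/-- **Lemma 2.2 (reduction lemma).** Let `f_1,…,f_t ∈ S̃ \ (y)S̃` be bi-homogeneous and
`I = (f_1,…,f_t)`. For every bi-homogeneous `f ∈ S̃` there is a bi-homogeneous `g ∈ S̃`
with `(I,f) : y^∞ = (I,g) : y^∞`, and either `g = 0`, or `deg_x(g) = deg_x(f)` and the
image of `g` under `y ↦ 0` does not lie in the image of `I` under `y ↦ 0`. -/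
theorem reduction_lemma_bihomogeneous
    (k : Type) [Field k] (n : ℕ) (ω : Fin n → ℕ) (t : ℕ)
    (f : Fin t → Polynomial (MvPolynomial (Fin n) k))
    (hbihom : ∀ i, ∃ a w : ℕ, IsBiHomogeneous ω (f i) a w)
    (hnoty : ∀ i, f i ∉ Ideal.span {(Polynomial.X : Polynomial (MvPolynomial (Fin n) k))})
    (F : Polynomial (MvPolynomial (Fin n) k)) (a w : ℕ) (hF : IsBiHomogeneous ω F a w) :
    ∃ g : Polynomial (MvPolynomial (Fin n) k),
      (∃ a' w' : ℕ, IsBiHomogeneous ω g a' w') ∧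
      ySat (Ideal.span (Set.range f) ⊔ Ideal.span {F}) =
        ySat (Ideal.span (Set.range f) ⊔ Ideal.span {g}) ∧
      (g = 0 ∨ (degX g = degX F ∧
        Polynomial.eval 0 g ∉
          Ideal.map (Polynomial.evalRingHom (0 : MvPolynomial (Fin n) k))
            (Ideal.span (Set.range f)))) :=
  reduction_lemma_bihomogeneous_general k n ω t f hbihom F a w hF
end
end
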